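/- Let n_s ≥ 2, let Δs_0, …, Δs_{n_s-1} > 0, K_∥ > 0, γ ≥ 0, Δt > 0, M ≥ 0. Suppose (T_i^n)_{0≤i≤n_s-1, n∈ℕ} satisfies the implicit finite volume scheme (T_i^{n+1} − T_i^n)/Δt = (F_{i+1/2}^{n+1} − F_{i−1/2}^{n+1})/Δs_i, where for 0 ≤ i ≤ n_s−2, F_{i+1/2}^{n+1} = (4K_∥/7)·(|T_{i+1}^{n+1}|^{5/2} T_{i+1}^{n+1} − |T_i^{n+1}|^{5/2} T_i^{n+1})/(Δs_{i+1} + Δs_i), and F_{−1/2}^{n+1} = γ T_0^{n+1}, F_{n_s−1/2}^{n+1} = −γ T_{n_s−1}^{n+1}. If 0 ≤ T_i^0 ≤ M for all i, then 0 ≤ T_i^n ≤ M for all 0 ≤ i ≤ n_s−1 and all n ∈ ℕ. -/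

import Mathlib

/-!
At each time level, look at a node `i` where the new temperature is minimal. If that minimum is
nonpositive then, because `x ↦ |x| ^ (5/2) * x` is monotone and `γ ≥ 0`, the fluxes at the two
faces of the cell satisfy `F_{i-1/2} ≤ 0 ≤ F_{i+1/2}`, so the balance equation says that the
temperature at `i` did not decrease during the step. Hence any lower bound `m ≤ 0` propagates
from one level to the next. The scheme is odd (`T ↦ -T`, `F ↦ -F`), so the same argument applied
to `-T` with `m = -M` propagates the upper bound.
-/

lemma monotone_abs_rpow_mul_self {p : ℝ} (hp : 0 ≤ p) : Monotone fun x : ℝ ↦ |x| ^ p * x := by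
  have nonneg_case : ∀ x y : ℝ, 0 ≤ x → x ≤ y → |x| ^ p * x ≤ |y| ^ p * y := fun x y hx hxy ↦ by
    rw [abs_of_nonneg hx, abs_of_nonneg (hx.trans hxy)]
    exact mul_le_mul (Real.rpow_le_rpow hx hxy hp) hxy hx (Real.rpow_nonneg (hx.trans hxy) p)
  intro x y hxy
  rcases le_total 0 x with hx | hx
  · exact nonneg_case x y hx hxy
  rcases le_total 0 y with hy | hy
  · have hx' : |x| ^ p * x ≤ 0 := mul_nonpos_of_nonneg_of_nonpos (by positivity) hx
    have hy' : 0 ≤ |y| ^ p * y := mul_nonneg (by positivity) hy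
    linarith
  · have := nonneg_case (-y) (-x) (neg_nonneg.mpr hy) (neg_le_neg hxy)
    simp only [abs_neg, mul_neg] at this
    linarith

/-- `F i` is the flux `F_{i-1/2}` computed from the new level `v`. -/
structure IsImplicitStep (ns : ℕ) (Δs : ℕ → ℝ) (K γ Δt : ℝ) (u v F : ℕ → ℝ) : Prop where
  left_flux : F 0 = γ * v 0
  right_flux : F ns = -γ * v (ns - 1)
  interior_flux : ∀ i, 1 ≤ i → i ≤ ns - 1 →
    F i = (4 * K / 7) * (|v i| ^ ((5:ℝ)/2) * v i - |v (i-1)| ^ ((5:ℝ)/2) * v (i-1))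
      / (Δs i + Δs (i-1))
  balance : ∀ i < ns, (v i - u i) / Δt = (F (i+1) - F i) / Δs i

namespace IsImplicitStep

variable {ns : ℕ} {Δs : ℕ → ℝ} {K γ Δt : ℝ} {u v F : ℕ → ℝ}

lemma neg (h : IsImplicitStep ns Δs K γ Δt u v F) : IsImplicitStep ns Δs K γ Δt (-u) (-v) (-F) where
  left_flux := by simp [h.left_flux]
  right_flux := by simp [h.right_flux]
  interior_flux i h₁ h₂ := by
    simp only [Pi.neg_apply, h.interior_flux i h₁ h₂, abs_neg]
    ring
  balance i hi := by
    simp only [Pi.neg_apply, neg_sub_neg, ← neg_sub (F (i+1)), ← neg_sub (v i), neg_div,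
      h.balance i hi]

lemma interior_flux_nonneg (h : IsImplicitStep ns Δs K γ Δt u v F) (hK : 0 ≤ K)
    (hΔs : ∀ i < ns, 0 < Δs i) {i : ℕ} (h₁ : 1 ≤ i) (h₂ : i ≤ ns - 1) (hv : v (i-1) ≤ v i) :
    0 ≤ F i := by
  have hden : 0 < Δs i + Δs (i-1) := add_pos (hΔs i (by omega)) (hΔs (i-1) (by omega))
  rw [h.interior_flux i h₁ h₂]
  exact div_nonneg (mul_nonneg (by positivity)
    (sub_nonneg.mpr (monotone_abs_rpow_mul_self (by norm_num) hv))) hden.le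

lemma interior_flux_nonpos (h : IsImplicitStep ns Δs K γ Δt u v F) (hK : 0 ≤ K)
    (hΔs : ∀ i < ns, 0 < Δs i) {i : ℕ} (h₁ : 1 ≤ i) (h₂ : i ≤ ns - 1) (hv : v i ≤ v (i-1)) :
    F i ≤ 0 := by
  simpa using h.neg.interior_flux_nonneg hK hΔs h₁ h₂ (by simpa using hv)

lemma flux_le_flux_of_isMin (h : IsImplicitStep ns Δs K γ Δt u v F) (hK : 0 ≤ K) (hγ : 0 ≤ γ)
    (hΔs : ∀ i < ns, 0 < Δs i) {i : ℕ} (hi : i < ns) (hmin : ∀ j < ns, v i ≤ v j)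
    (hvi : v i ≤ 0) : F i ≤ F (i+1) := by
  have hleft : F i ≤ 0 := by
    rcases Nat.eq_zero_or_pos i with rfl | hpos
    · rw [h.left_flux]
      exact mul_nonpos_of_nonneg_of_nonpos hγ hvi
    · exact h.interior_flux_nonpos hK hΔs hpos (by omega) (hmin _ (by omega))
  have hright : 0 ≤ F (i+1) := by
    rcases (show i + 1 ≤ ns by omega).eq_or_lt with hlast | hlt
    · rw [hlast, h.right_flux, ← hlast, Nat.add_sub_cancel]
      exact mul_nonneg_of_nonpos_of_nonpos (neg_nonpos.mpr hγ) hvi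
    · exact h.interior_flux_nonneg hK hΔs (by omega) (by omega)
        (by simpa using hmin _ hlt)
  exact hleft.trans hright

lemma le_of_flux_le (h : IsImplicitStep ns Δs K γ Δt u v F) (hΔt : 0 < Δt)
    (hΔs : ∀ i < ns, 0 < Δs i) {i : ℕ} (hi : i < ns) (hF : F i ≤ F (i+1)) : u i ≤ v i := by
  have : 0 ≤ (v i - u i) / Δt := h.balance i hi ▸ div_nonneg (sub_nonneg.mpr hF) (hΔs i hi).le
  rwa [le_div_iff₀ hΔt, zero_mul, sub_nonneg] at this

lemma lower_bound (h : IsImplicitStep ns Δs K γ Δt u v F) (hns : 0 < ns) (hK : 0 ≤ K)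
    (hγ : 0 ≤ γ) (hΔt : 0 < Δt) (hΔs : ∀ i < ns, 0 < Δs i) {m : ℝ} (hm : m ≤ 0)
    (hu : ∀ i < ns, m ≤ u i) : ∀ i < ns, m ≤ v i := by
  obtain ⟨i, hi, hmin⟩ : ∃ i < ns, ∀ j < ns, v i ≤ v j := by
    simpa using (Finset.range ns).exists_min_image v (Finset.nonempty_range_iff.mpr hns.ne')
  suffices m ≤ v i from fun j hj ↦ this.trans (hmin j hj)
  rcases le_total (v i) 0 with hvi | hvi
  · exact (hu i hi).trans
      (h.le_of_flux_le hΔt hΔs hi (h.flux_le_flux_of_isMin hK hγ hΔs hi hmin hvi))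
  · exact hm.trans hvi

end IsImplicitStep

/-- Discrete maximum principle (L^∞ bound) part of Proposition 2.2 for the
backward Euler finite volume scheme for the 1D nonlinear heat equation.
Here `F n i` denotes the numerical flux `F_{i-1/2}^n` computed from the
values at time level `n`. -/
theorem implicit_scheme_maximum_principle
    (ns : ℕ) (hns : 2 ≤ ns)
    (Δs : ℕ → ℝ) (hΔs : ∀ i < ns, 0 < Δs i)
    (K γ Δt M : ℝ) (hK : 0 < K) (hγ : 0 ≤ γ) (hΔt : 0 < Δt) (hM : 0 ≤ M)
    (T F : ℕ → ℕ → ℝ)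
    (hF0 : ∀ n, F n 0 = γ * T n 0)
    (hFns : ∀ n, F n ns = -γ * T n (ns - 1))
    (hFint : ∀ n i, 1 ≤ i → i ≤ ns - 1 →
      F n i = (4 * K / 7) *
        (|T n i| ^ ((5:ℝ)/2) * T n i - |T n (i-1)| ^ ((5:ℝ)/2) * T n (i-1))
        / (Δs i + Δs (i-1)))
    (hscheme : ∀ n, ∀ i < ns,
      (T (n+1) i - T n i) / Δt = (F (n+1) (i+1) - F (n+1) i) / Δs i)
    (hinit : ∀ i < ns, 0 ≤ T 0 i ∧ T 0 i ≤ M) :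
    ∀ n, ∀ i < ns, 0 ≤ T n i ∧ T n i ≤ M := by
  intro n
  induction n with
  | zero => exact hinit
  | succ n ih =>
    have hstep : IsImplicitStep ns Δs K γ Δt (T n) (T (n+1)) (F (n+1)) :=
      ⟨hF0 _, hFns _, hFint _, hscheme n⟩
    have hlower := hstep.lower_bound (by omega) hK.le hγ hΔt hΔs le_rfl fun i hi ↦ (ih i hi).1
    have hupper := hstep.neg.lower_bound (by omega) hK.le hγ hΔt hΔs (neg_nonpos.mpr hM)
      fun i hi ↦ neg_le_neg (ih i hi).2
    exact fun i hi ↦ ⟨hlower i hi, neg_le_neg_iff.mp (hupper i hi)⟩
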